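/- Let (Ω, F, P) be a complete probability space and ξ^1, ξ^2, … : Ω → [0,1] be i.i.d. random variables, each uniformly distributed on [0,1]. Then there exist a Carathéodory function f : [0,1] × ℝ → ℝ and a sequence δ^ν ∈ (0,1] with δ^ν decreasing to 0 such that: (a) for every ξ ∈ [0,1], the function f(ξ,·) is 1-Lipschitz on ℝ; (b) for every x ∈ ℝ, E|f(ξ^1, x)| < ∞; (c) for every ν ≥ 1, the set D^ν = {x ∈ [0,1] : for every ξ ∈ [0,1], f(ξ,·) is continuously differentiable on the closed ball B(x, δ^ν)} is nonempty; (d) P-almost surely, liminf_{ν→∞} sup_{x ∈ D^ν} inf_{y, ŷ ∈ B(x, δ^ν)} | E[∂_x f(ξ^1, y)] − (1/ν) Σ_{i=1}^{ν} ∂_x f(ξ^i, ŷ) | ≥ 1/2, where ∂_x f(ξ, ·) denotes the derivative of f(ξ, ·). -/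

import Mathlib

open MeasureTheory ProbabilityTheory Filter

noncomputable section Stmt0Aux

open Set Metric
open scoped ENNReal Classical

namespace Stmt0

/-- codes at level ν -/
abbrev Code (ν : ℕ) := Fin ν → Fin (8*ν+1)

def M (ν : ℕ) : ℕ := Fintype.card (Code ν)

lemma M_pos (ν : ℕ) : 0 < M ν := Fintype.card_pos

lemma M_eq (ν : ℕ) : M ν = (8*ν+1)^ν := by
  simp [M, Fintype.card_fun]

lemma M_mono : Monotone M := by
  apply monotone_nat_of_le_succ
  intro ν
  rw [M_eq, M_eq]
  calc (8*ν+1)^ν ≤ (8*(ν+1)+1)^ν := Nat.pow_le_pow_left (by omega) _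
    _ ≤ (8*(ν+1)+1)^(ν+1) := Nat.pow_le_pow_right (by omega) (by omega)

/-- covering sets in t-space -/
def A (ν : ℕ) (c : Code ν) : Set ℝ :=
  ⋃ i : Fin ν, closedBall ((c i : ℝ)/(8*ν)) (1/(16*ν))

lemma A_meas (ν : ℕ) (c : Code ν) : MeasurableSet (A ν c) :=
  MeasurableSet.iUnion fun _ => measurableSet_closedBall

lemma A_vol {ν : ℕ} (hν : 1 ≤ ν) (c : Code ν) :
    volume (A ν c) ≤ ENNReal.ofReal (1/8) := by
  have hν' : (0:ℝ) < ν := by exact_mod_cast hν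
  have hb : ∀ i : Fin ν, volume (closedBall ((c i : ℝ)/(8*ν)) (1/(16*ν)))
      = ENNReal.ofReal (1/(8*ν)) := by
    intro i
    rw [Real.volume_closedBall]
    congr 1
    rw [eq_div_iff (by positivity)]
    field_simp
    ring
  calc volume (A ν c) ≤ ∑ i : Fin ν, volume (closedBall ((c i : ℝ)/(8*ν)) (1/(16*ν))) :=
        measure_iUnion_fintype_le _ _
    _ = (ν : ℝ≥0∞) * ENNReal.ofReal (1/(8*ν)) := by
        simp only [hb, Finset.sum_const, Finset.card_univ, Fintype.card_fin, nsmul_eq_mul]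
    _ = ENNReal.ofReal ((ν:ℝ) * (1/(8*ν))) := by
        rw [ENNReal.ofReal_mul (by positivity), ENNReal.ofReal_natCast]
    _ = ENNReal.ofReal (1/8) := by
        congr 1
        field_simp

/-- the covering property -/
lemma A_cover {ν : ℕ} (hν : 1 ≤ ν) (τ : Fin ν → ℝ) (hτ : ∀ i, τ i ∈ Icc (0:ℝ) 1) :
    ∃ c : Code ν, ∀ i, τ i ∈ A ν c := by
  have hν' : (0:ℝ) < ν := by exact_mod_cast hν
  have hkey : ∀ i : Fin ν, 0 ≤ round ((8*ν : ℝ) * τ i) ∧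
      (round ((8*ν : ℝ) * τ i)).toNat < 8*ν+1 := by
    intro i
    obtain ⟨h0, h1⟩ := hτ i
    have hx0 : (0:ℝ) ≤ (8*ν : ℝ) * τ i := by positivity
    have hx1 : (8*ν : ℝ) * τ i ≤ 8*ν := by nlinarith
    constructor
    · have h := sub_half_lt_round ((8*ν : ℝ) * τ i)
      have h2 : (-1 : ℝ) < (round ((8*ν : ℝ) * τ i) : ℝ) := by linarith
      have h3 : (-1 : ℤ) < round ((8*ν : ℝ) * τ i) := by exact_mod_cast h2
      omega
    · have hr := round_le_add_half ((8*ν : ℝ) * τ i)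
      have h2 : (round ((8*ν : ℝ) * τ i) : ℝ) < 8*ν + 1 := by linarith
      have h3 : round ((8*ν : ℝ) * τ i) < (8*(ν:ℤ) + 1 : ℤ) := by exact_mod_cast h2
      omega
  refine ⟨fun i => ⟨(round ((8*ν : ℝ) * τ i)).toNat, by have := (hkey i).2; omega⟩, fun i => ?_⟩
  apply mem_iUnion.mpr ⟨i, ?_⟩
  rw [mem_closedBall, Real.dist_eq]
  have h0 := (hkey i).1
  set r : ℝ := (round ((8*ν : ℝ) * τ i) : ℝ) with hr
  have hcast : (((round ((8*ν : ℝ) * τ i)).toNat : ℕ) : ℝ) = r := by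
    rw [hr]; exact_mod_cast Int.toNat_of_nonneg h0
  have habs : |(8*ν : ℝ) * τ i - r| ≤ 1/2 := abs_sub_round _
  have hrepr : τ i - (((round ((8*ν : ℝ) * τ i)).toNat : ℕ) : ℝ)/(8*ν)
      = ((8*ν : ℝ) * τ i - r)/(8*ν) := by
    rw [hcast]; field_simp
  rw [hrepr, abs_div, abs_of_pos (by positivity : (0:ℝ) < 8*ν)]
  rw [div_le_iff₀ (by positivity : (0:ℝ) < 8*ν)]
  have : 1/(16*(ν:ℝ)) * (8*ν) = 1/2 := by field_simp; ring
  rw [this]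
  exact habs

/-! ### interval geometry -/

def Idx := Σ ν : ℕ, Code ν

instance : Countable Idx := by unfold Idx; infer_instance

def bb (ν : ℕ) : ℝ := 1/2^(ν+2)

def L (ν : ℕ) : ℝ := 1/(2^(ν+2) * M ν)

lemma bb_pos (ν : ℕ) : 0 < bb ν := by unfold bb; positivity

lemma L_pos (ν : ℕ) : 0 < L ν := by
  have h : (0:ℝ) < M ν := by exact_mod_cast M_pos ν
  unfold L
  positivity

lemma ML_eq (ν : ℕ) : (M ν : ℝ) * L ν = bb ν := by
  have := M_pos ν
  unfold L bb
  have h : (0:ℝ) < M ν := by exact_mod_cast M_pos ν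
  field_simp

lemma L_le_bb (ν : ℕ) : L ν ≤ bb ν := by
  have h := ML_eq ν
  have hM : (1:ℝ) ≤ M ν := by exact_mod_cast M_pos ν
  nlinarith [L_pos ν]

/-- left endpoint of the cell of an index -/
def pa (n : Idx) : ℝ := bb n.1 + (Fintype.equivFin (Code n.1) n.2 : ℕ) * L n.1

def lo (n : Idx) : ℝ := pa n + L n.1/8
def hi (n : Idx) : ℝ := pa n + 7*(L n.1)/8
def ctr (n : Idx) : ℝ := pa n + L n.1/2

/-- the width-δ sequence -/
def del (ν : ℕ) : ℝ := L ν / 8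

lemma del_pos (ν : ℕ) : 0 < del ν := by have := L_pos ν; unfold del; linarith

lemma pa_bounds (n : Idx) : bb n.1 ≤ pa n ∧ pa n + L n.1 ≤ 2 * bb n.1 := by
  have hL := L_pos n.1
  have hidx : ((Fintype.equivFin (Code n.1) n.2 : ℕ) : ℝ) + 1 ≤ (M n.1 : ℝ) := by
    have := (Fintype.equivFin (Code n.1) n.2).isLt
    rw [M]
    exact_mod_cast this
  constructor
  · have : (0:ℝ) ≤ (Fintype.equivFin (Code n.1) n.2 : ℕ) := by positivity
    unfold pa; nlinarith
  · have := ML_eq n.1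
    unfold pa; nlinarith

lemma bb_anti {ν ν' : ℕ} (h : ν < ν') : 2 * bb ν' ≤ bb ν := by
  unfold bb
  rw [show (2:ℝ) * (1/2^(ν'+2)) = 2/2^(ν'+2) by ring,
      div_le_div_iff₀ (by positivity) (by positivity)]
  have : (2:ℝ)^(ν+2) * 2 ≤ 2^(ν'+2) := by
    rw [show (2:ℝ)^(ν+2) * 2 = 2^(ν+3) by ring]
    exact pow_le_pow_right₀ (by norm_num) (by omega)
  nlinarith [pow_pos (show (0:ℝ) < 2 by norm_num) (ν+2), pow_pos (show (0:ℝ) < 2 by norm_num) (ν'+2)]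

lemma hi_le (n : Idx) : hi n ≤ 2 * bb n.1 - L n.1/8 := by
  have := (pa_bounds n).2
  unfold hi; linarith

lemma lo_ge (n : Idx) : bb n.1 + L n.1/8 ≤ lo n := by
  have := (pa_bounds n).1
  unfold lo; linarith

lemma hi_le_half (n : Idx) : hi n ≤ 1/2 := by
  have h1 := hi_le n
  have h2 : bb n.1 ≤ 1/4 := by
    unfold bb
    rw [div_le_div_iff₀ (by positivity) (by norm_num)]
    have : (4:ℝ) ≤ 2^(n.1+2) := by
      calc (4:ℝ) = 2^2 := by norm_num
      _ ≤ 2^(n.1+2) := pow_le_pow_right₀ (by norm_num) (by omega)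
    linarith
  have := L_pos n.1
  linarith

lemma lo_pos (n : Idx) : 0 < lo n := by
  have := lo_ge n
  have := bb_pos n.1
  have := L_pos n.1
  linarith

/-- disjointness of the cells -/
lemma cells_disjoint {n m : Idx} (hnm : n ≠ m) {y : ℝ}
    (hy : y ∈ Icc (lo n) (hi n)) (hy' : y ∈ Icc (lo m) (hi m)) : False := by
  -- first: different levels
  have hcross : ∀ p q : Idx, p.1 < q.1 → y ∈ Icc (lo p) (hi p) → y ∈ Icc (lo q) (hi q) → False := by
    intro p q hpq h1 h2
    have : hi q ≤ 2 * bb q.1 := by have := hi_le q; have := L_pos q.1; linarith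
    have h3 : 2 * bb q.1 ≤ bb p.1 := bb_anti hpq
    have h4 : bb p.1 + L p.1/8 ≤ lo p := lo_ge p
    have := L_pos p.1
    have := h1.1; have := h2.2
    linarith
  rcases lt_trichotomy n.1 m.1 with h | h | h
  · exact hcross n m h hy hy'
  · -- same level: distinct codes
    obtain ⟨ν, c⟩ := n
    obtain ⟨ν', c'⟩ := m
    simp only at h
    subst h
    have hcc : c ≠ c' := fun hc => hnm (by rw [hc])
    have hij : (Fintype.equivFin (Code ν) c : ℕ) ≠ (Fintype.equivFin (Code ν) c' : ℕ) := by
      intro hh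
      exact hcc ((Fintype.equivFin (Code ν)).injective (Fin.ext hh))
    have hsame : ∀ (d d' : Code ν),
        (Fintype.equivFin (Code ν) d : ℕ) < (Fintype.equivFin (Code ν) d' : ℕ) →
        y ∈ Icc (lo ⟨ν, d⟩) (hi ⟨ν, d⟩) → y ∈ Icc (lo ⟨ν, d'⟩) (hi ⟨ν, d'⟩) → False := by
      intro d d' hdd h1 h2
      have hL := L_pos ν
      have : ((Fintype.equivFin (Code ν) d : ℕ) : ℝ) + 1 ≤ ((Fintype.equivFin (Code ν) d' : ℕ) : ℝ) := by
        exact_mod_cast hdd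
      have e1 : hi ⟨ν, d⟩ < lo ⟨ν, d'⟩ := by
        unfold hi lo pa
        simp only
        nlinarith
      have := h1.2; have := h2.1
      linarith
    rcases lt_or_gt_of_ne hij with hlt | hgt
    · exact hsame c c' hlt hy hy'
    · exact hsame c' c hgt hy' hy
  · exact hcross m n h hy' hy

/-! ### the function -/

def E : Set (ℝ × ℝ) := ⋃ n : Idx, (A n.1 n.2) ×ˢ Icc (lo n) (hi n)

lemma E_meas : MeasurableSet E :=
  MeasurableSet.iUnion fun n => (A_meas n.1 n.2).prod measurableSet_Icc

def g (t y : ℝ) : ℝ := if (t, y) ∈ E then 1 else 0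

/-- slope indicator -/
def s (n : Idx) (t : ℝ) : ℝ := if t ∈ A n.1 n.2 then 1 else 0

lemma g_nonneg (t y : ℝ) : 0 ≤ g t y := by unfold g; split <;> norm_num

lemma g_le_one (t y : ℝ) : g t y ≤ 1 := by unfold g; split <;> norm_num

lemma g_abs_le (t y : ℝ) : ‖g t y‖ ≤ 1 := by
  rw [Real.norm_eq_abs, abs_le]
  exact ⟨by linarith [g_nonneg t y], g_le_one t y⟩

lemma g_eq_on (n : Idx) (t : ℝ) {y : ℝ} (hy : y ∈ Ioo (lo n) (hi n)) :
    g t y = s n t := by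
  unfold g s
  by_cases ht : t ∈ A n.1 n.2
  · rw [if_pos ht, if_pos]
    exact mem_iUnion.mpr ⟨n, ⟨ht, Ioo_subset_Icc_self hy⟩⟩
  · rw [if_neg ht, if_neg]
    intro hmem
    obtain ⟨m, hm⟩ := mem_iUnion.mp hmem
    by_cases hnm : m = n
    · subst hnm; exact ht hm.1
    · exact cells_disjoint hnm hm.2 (Ioo_subset_Icc_self hy)

lemma g_zero_of_large (t : ℝ) {y : ℝ} (hy : 1/2 < y) : g t y = 0 := by
  unfold g
  rw [if_neg]
  intro hmem
  obtain ⟨m, hm⟩ := mem_iUnion.mp hmem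
  have := hm.2.2
  have := hi_le_half m
  linarith

lemma g_joint_meas : Measurable (fun p : ℝ × ℝ => g p.1 p.2) := by
  unfold g
  exact Measurable.ite E_meas measurable_const measurable_const

lemma g_slice_meas (t : ℝ) : Measurable (g t) :=
  g_joint_meas.comp (measurable_prodMk_left)

lemma g_ii (t a b : ℝ) : IntervalIntegrable (g t) volume a b := by
  rw [intervalIntegrable_iff]
  apply Measure.integrableOn_of_bounded (M := 1)
  · exact (measure_Ioc_lt_top).ne
  · exact (g_slice_meas t).aestronglyMeasurable
  · exact Filter.Eventually.of_forall fun y => g_abs_le t y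

def f (t x : ℝ) : ℝ := ∫ u in (0:ℝ)..x, g t u

lemma f_sub (t x x' : ℝ) : f t x - f t x' = ∫ u in x'..x, g t u :=
  intervalIntegral.integral_interval_sub_left (g_ii t 0 x) (g_ii t 0 x')

lemma f_lip (t : ℝ) : LipschitzWith 1 (f t) := by
  apply LipschitzWith.of_dist_le_mul
  intro x y
  rw [Real.dist_eq, Real.dist_eq]
  have h2 := f_sub t x y
  have := intervalIntegral.norm_integral_le_of_norm_le_const
    (C := 1) (f := g t) (a := y) (b := x) (fun u _ => g_abs_le t u)
  rw [Real.norm_eq_abs, ← h2] at this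
  calc |f t x - f t y| ≤ 1 * |x - y| := this
    _ = ↑(1:NNReal) * |x - y| := by norm_num

lemma f_bdd (t x : ℝ) : |f t x| ≤ |x| := by
  have := intervalIntegral.norm_integral_le_of_norm_le_const
    (C := 1) (f := g t) (a := 0) (b := x) (fun u _ => g_abs_le t u)
  rw [Real.norm_eq_abs] at this
  unfold f
  simpa using this

/-- local affine structure -/
lemma f_affine (t : ℝ) {n : Idx} {x x' : ℝ} (hx : x ∈ Ioo (lo n) (hi n))
    (hx' : x' ∈ Ioo (lo n) (hi n)) : f t x - f t x' = s n t * (x - x') := by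
  rw [f_sub t x x']
  have heq : EqOn (g t) (fun _ => s n t) (uIcc x' x) := by
    intro u hu
    apply g_eq_on n t
    rw [mem_uIcc] at hu
    rcases hu with h | h
    · exact ⟨lt_of_lt_of_le hx'.1 h.1, lt_of_le_of_lt h.2 hx.2⟩
    · exact ⟨lt_of_lt_of_le hx.1 h.1, lt_of_le_of_lt h.2 hx'.2⟩
  rw [intervalIntegral.integral_congr heq, intervalIntegral.integral_const, smul_eq_mul]
  ring

lemma f_hasDerivAt (t : ℝ) {n : Idx} {y : ℝ} (hy : y ∈ Ioo (lo n) (hi n)) :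
    HasDerivAt (f t) (s n t) y := by
  have heq : f t =ᶠ[nhds y] fun x => s n t * (x - y) + f t y := by
    filter_upwards [isOpen_Ioo.mem_nhds hy] with x hx
    have := f_affine t hx hy
    linarith
  have : HasDerivAt (fun x => s n t * (x - y) + f t y) (s n t) y := by
    simpa using (((hasDerivAt_id y).sub_const y).const_mul (s n t)).add_const (f t y)
  exact this.congr_of_eventuallyEq heq

lemma f_deriv (t : ℝ) {n : Idx} {y : ℝ} (hy : y ∈ Ioo (lo n) (hi n)) :
    deriv (f t) y = s n t := (f_hasDerivAt t hy).deriv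

lemma f_deriv_abs_le (t y : ℝ) : |deriv (f t) y| ≤ 1 := by
  have := norm_deriv_le_of_lipschitz (𝕜 := ℝ) (f_lip t) (x₀ := y)
  simpa using this

lemma f_t_meas (x : ℝ) : Measurable (fun t => f t x) := by
  have key : ∀ b : ℝ, Measurable (fun t => ∫ y in Set.uIoc (0:ℝ) b, g t y) := by
    intro b
    exact (MeasureTheory.StronglyMeasurable.integral_prod_right
      (f := fun t y => g t y) (ν := volume.restrict (Set.uIoc (0:ℝ) b))
      (by exact g_joint_meas.stronglyMeasurable)).measurable
  have : (fun t => f t x)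
      = fun t => (if (0:ℝ) ≤ x then (1:ℝ) else -1) * ∫ y in Set.uIoc (0:ℝ) x, g t y := by
    funext t
    rw [f, intervalIntegral.intervalIntegral_eq_integral_uIoc, smul_eq_mul]
  rw [this]
  exact (key x).const_mul _

lemma del_le (ν : ℕ) : del ν ≤ 1/32 := by
  have h1 : L ν ≤ bb ν := L_le_bb ν
  have h2 : bb ν ≤ 1/4 := by
    unfold bb
    rw [div_le_div_iff₀ (by positivity) (by norm_num)]
    have : (4:ℝ) ≤ 2^(ν+2) := by
      calc (4:ℝ) = 2^2 := by norm_num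
      _ ≤ 2^(ν+2) := pow_le_pow_right₀ (by norm_num) (by omega)
    linarith
  unfold del
  linarith

lemma del_anti : Antitone del := by
  apply antitone_nat_of_succ_le
  intro ν
  have h1 : (0:ℝ) < 2^(ν+2) * M ν := by
    have : (0:ℝ) < M ν := by exact_mod_cast M_pos ν
    positivity
  have hM : (M ν : ℝ) ≤ M (ν+1) := by exact_mod_cast M_mono (Nat.le_succ ν)
  have hp : (2:ℝ)^(ν+2) ≤ 2^(ν+1+2) := pow_le_pow_right₀ (by norm_num) (by omega)
  have hM0 : (0:ℝ) < M ν := by exact_mod_cast M_pos ν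
  have hle : (2:ℝ)^(ν+2) * M ν ≤ 2^(ν+1+2) * M (ν+1) :=
    mul_le_mul hp hM hM0.le (by positivity)
  have : L (ν+1) ≤ L ν := by
    unfold L
    exact one_div_le_one_div_of_le h1 hle
  unfold del
  linarith

lemma del_tendsto : Filter.Tendsto del atTop (nhds 0) := by
  apply squeeze_zero (fun ν => le_of_lt (del_pos ν)) (fun ν => ?_)
    (tendsto_pow_atTop_nhds_zero_of_lt_one (by norm_num : (0:ℝ) ≤ 1/2) (by norm_num))
  show del ν ≤ (1/2:ℝ)^ν
  have h1 : L ν ≤ bb ν := L_le_bb ν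
  have h2 : bb ν ≤ (1/2:ℝ)^ν := by
    unfold bb
    rw [div_pow, one_pow]
    apply div_le_div_of_nonneg_left (by norm_num) (by positivity)
    exact pow_le_pow_right₀ (by norm_num) (by omega)
  have h3 := del_pos ν
  unfold del at h3 ⊢
  linarith

/-- the ball around the center of a cell -/
lemma ball_sub_Ioo (n : Idx) : closedBall (ctr n) (del n.1) ⊆ Ioo (lo n) (hi n) := by
  intro x hx
  rw [mem_closedBall, Real.dist_eq, abs_le] at hx
  have hL := L_pos n.1
  unfold ctr del at hx
  unfold lo hi
  constructor
  · show pa n + L n.1/8 < x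
    nlinarith [hx.1, hx.2]
  · show x < pa n + 7*(L n.1)/8
    nlinarith [hx.1, hx.2]

lemma f_contDiffOn (t : ℝ) (n : Idx) :
    ContDiffOn ℝ 1 (f t) (closedBall (ctr n) (del n.1)) := by
  have hctr : ctr n ∈ Ioo (lo n) (hi n) :=
    ball_sub_Ioo n (mem_closedBall_self (le_of_lt (del_pos n.1)))
  apply ContDiffOn.congr (f := fun x => s n t * (x - ctr n) + f t (ctr n))
  · apply ContDiff.contDiffOn
    exact (contDiff_const.mul (contDiff_id.sub contDiff_const)).add contDiff_const
  · intro x hx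
    have := f_affine t (ball_sub_Ioo n hx) hctr
    linarith

lemma ctr_mem_Icc (n : Idx) : ctr n ∈ Icc (0:ℝ) 1 := by
  have h1 : lo n < ctr n := by
    have := L_pos n.1; unfold lo ctr; linarith
  have h2 : ctr n < hi n := by
    have := L_pos n.1; unfold ctr hi; linarith
  have := lo_pos n
  have := hi_le_half n
  constructor <;> linarith

/-- constancy of f near 1 -/
lemma f_const_near_one (t : ℝ) {ν : ℕ} {x : ℝ} (hx : x ∈ closedBall (1:ℝ) (del ν)) :
    f t x = f t 1 := by
  rw [mem_closedBall, Real.dist_eq, abs_le] at hx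
  have hd := del_le ν
  have hd0 := del_pos ν
  have key : f t x - f t 1 = ∫ u in (1:ℝ)..x, g t u := f_sub t x 1
  have hzero : EqOn (g t) (fun _ => (0:ℝ)) (uIcc 1 x) := by
    intro u hu
    apply g_zero_of_large
    rw [mem_uIcc] at hu
    rcases hu with h | h
    · linarith [h.1]
    · linarith [h.1, hx.1]
  have : (∫ u in (1:ℝ)..x, g t u) = 0 := by
    rw [intervalIntegral.integral_congr hzero]
    simp
  linarith

lemma one_mem_D (ν : ℕ) : (1:ℝ) ∈ Icc (0:ℝ) 1 ∧
    ∀ t ∈ Icc (0:ℝ) 1, ContDiffOn ℝ 1 (f t) (closedBall (1:ℝ) (del ν)) := by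
  refine ⟨by norm_num, fun t _ => ?_⟩
  exact contDiffOn_const.congr fun x hx => f_const_near_one t hx

/-- the expectation integral -/
lemma exp_integral {n : Idx} {y : ℝ} (hy : y ∈ Ioo (lo n) (hi n)) :
    (∫ t in Icc (0:ℝ) 1, deriv (f t) y) = (volume (Icc (0:ℝ) 1 ∩ A n.1 n.2)).toReal := by
  have h1 : (fun t => deriv (f t) y) = (A n.1 n.2).indicator (fun _ => (1:ℝ)) := by
    funext t
    rw [f_deriv t hy]
    unfold s
    rw [Set.indicator_apply]
  rw [h1, MeasureTheory.setIntegral_indicator (A_meas n.1 n.2),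
      MeasureTheory.setIntegral_const]
  simp
  rfl

lemma exp_le {n : Idx} (hν : 1 ≤ n.1) :
    (volume (Icc (0:ℝ) 1 ∩ A n.1 n.2)).toReal ≤ 1/8 := by
  apply ENNReal.toReal_le_of_le_ofReal (by norm_num)
  exact le_trans (measure_mono inter_subset_right) (A_vol hν n.2)

lemma term_le_two (ν : ℕ) (w : ℕ → ℝ) (y z : ℝ) :
    |(∫ t in Icc (0:ℝ) 1, deriv (f t) y) -
      (ν:ℝ)⁻¹ * ∑ i ∈ Finset.range ν, deriv (f (w i)) z| ≤ 2 := by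
  have hI : |∫ t in Icc (0:ℝ) 1, deriv (f t) y| ≤ 1 := by
    by_cases hInt : Integrable (fun t => deriv (f t) y) (volume.restrict (Icc (0:ℝ) 1))
    · haveI : IsFiniteMeasure (volume.restrict (Icc (0:ℝ) 1)) := by
        constructor
        rw [Measure.restrict_apply_univ]
        simp [Real.volume_Icc]
      calc |∫ t in Icc (0:ℝ) 1, deriv (f t) y|
          ≤ ∫ t in Icc (0:ℝ) 1, |deriv (f t) y| := by
            simpa [Real.norm_eq_abs] using
              MeasureTheory.norm_integral_le_integral_norm
                (μ := volume.restrict (Icc (0:ℝ) 1)) (fun t => deriv (f t) y)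
        _ ≤ ∫ t in Icc (0:ℝ) 1, (1:ℝ) := by
            apply MeasureTheory.integral_mono hInt.abs (MeasureTheory.integrable_const 1)
            intro t; exact f_deriv_abs_le t y
        _ = 1 := by simp [Real.volume_Icc]
    · rw [MeasureTheory.integral_undef hInt]; norm_num
  have hS : |(ν:ℝ)⁻¹ * ∑ i ∈ Finset.range ν, deriv (f (w i)) z| ≤ 1 := by
    rw [abs_mul, abs_inv, Nat.abs_cast]
    rcases Nat.eq_zero_or_pos ν with h | h
    · subst h; simp
    · have hsum : |∑ i ∈ Finset.range ν, deriv (f (w i)) z| ≤ ν := by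
        calc |∑ i ∈ Finset.range ν, deriv (f (w i)) z|
            ≤ ∑ i ∈ Finset.range ν, |deriv (f (w i)) z| := Finset.abs_sum_le_sum_abs _ _
          _ ≤ ∑ i ∈ Finset.range ν, (1:ℝ) := Finset.sum_le_sum fun i _ => f_deriv_abs_le _ z
          _ = ν := by simp
      have hν : (0:ℝ) < ν := by exact_mod_cast h
      calc (ν:ℝ)⁻¹ * |∑ i ∈ Finset.range ν, deriv (f (w i)) z|
          ≤ (ν:ℝ)⁻¹ * ν := by
            apply mul_le_mul_of_nonneg_left hsum (by positivity)
        _ = 1 := inv_mul_cancel₀ hν.ne'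
  have htri := abs_add_le (∫ t in Icc (0:ℝ) 1, deriv (f t) y)
    (-((ν:ℝ)⁻¹ * ∑ i ∈ Finset.range ν, deriv (f (w i)) z))
  rw [abs_neg, ← sub_eq_add_neg] at htri
  linarith

lemma F_le_two (ν : ℕ) (w : ℕ → ℝ) (x : ℝ) :
    (⨅ y : closedBall x (del ν), ⨅ z : closedBall x (del ν),
      |(∫ t in Icc (0:ℝ) 1, deriv (f t) (y:ℝ)) -
        (ν:ℝ)⁻¹ * ∑ i ∈ Finset.range ν, deriv (f (w i)) (z:ℝ)|) ≤ 2 := by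
  haveI : Nonempty ↥(closedBall x (del ν)) := ⟨⟨x, mem_closedBall_self (del_pos ν).le⟩⟩
  refine ciInf_le_of_le ⟨0, ?_⟩ ⟨x, mem_closedBall_self (del_pos ν).le⟩ ?_
  · rintro v ⟨y, rfl⟩; exact Real.iInf_nonneg fun z => abs_nonneg _
  refine ciInf_le_of_le ⟨0, ?_⟩ ⟨x, mem_closedBall_self (del_pos ν).le⟩ ?_
  · rintro v ⟨z, rfl⟩; exact abs_nonneg _
  exact term_le_two ν w _ _

end Stmt0

end Stmt0Aux

/-- for any i.i.d. sequence of uniform random variables on `[0,1]` on a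
complete probability space, there exist a Carathéodory function `f : [0,1] × ℝ → ℝ` and a
sequence `δ^ν ∈ (0,1]` decreasing to `0` such that: (a) `f(ξ,·)` is 1-Lipschitz for every
`ξ ∈ [0,1]`; (b) `E|f(ξ^1,x)| < ∞` for every `x`; (c) each set
`D^ν = {x ∈ [0,1] : f(ξ,·) is C¹ on B(x,δ^ν) for all ξ ∈ [0,1]}` is nonempty; and
(d) almost surely,
`liminf_ν sup_{x ∈ D^ν} inf_{y,ŷ ∈ B(x,δ^ν)} |E[∂f(ξ^1,y)] − ν⁻¹ Σ_{i<ν} ∂f(ξ^i,ŷ)| ≥ 1/2`. -/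
theorem stmt_0
    {Ω : Type*} [MeasurableSpace Ω] (P : Measure Ω) [IsProbabilityMeasure P]
    (hPcomp : P.IsComplete)
    (ξ : ℕ → Ω → ℝ) (hmeas : ∀ i, Measurable (ξ i))
    (hindep : iIndepFun ξ P)
    (hunif : ∀ i, Measure.map (ξ i) P = volume.restrict (Set.Icc (0 : ℝ) 1)) :
    ∃ (f : ℝ → ℝ → ℝ) (δ : ℕ → ℝ) (D : ℕ → Set ℝ),
      -- `f` is Carathéodory on `[0,1] × ℝ`
      (∀ t ∈ Set.Icc (0 : ℝ) 1, Continuous (f t)) ∧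
      (∀ x : ℝ, Measurable (fun t : Set.Icc (0 : ℝ) 1 => f t x)) ∧
      -- `δ^ν ∈ (0,1]` decreases to `0`
      (∀ ν, δ ν ∈ Set.Ioc (0 : ℝ) 1) ∧ Antitone δ ∧ Tendsto δ atTop (nhds 0) ∧
      -- the sets `D^ν`
      (D = fun ν => {x ∈ Set.Icc (0 : ℝ) 1 |
        ∀ t ∈ Set.Icc (0 : ℝ) 1, ContDiffOn ℝ 1 (f t) (Metric.closedBall x (δ ν))}) ∧
      -- (a) 1-Lipschitz in `x`
      (∀ t ∈ Set.Icc (0 : ℝ) 1, LipschitzWith 1 (f t)) ∧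
      -- (b) finite expectation
      (∀ x : ℝ, Integrable (fun ω => f (ξ 0 ω) x) P) ∧
      -- (c) nonemptiness
      (∀ ν : ℕ, (D ν).Nonempty) ∧
      -- (d) the liminf lower bound, almost surely
      (∀ᵐ ω ∂P, (1 : ℝ) / 2 ≤
        atTop.liminf (fun ν : ℕ =>
          ⨆ x : (D ν), ⨅ y : Metric.closedBall (x : ℝ) (δ ν),
            ⨅ z : Metric.closedBall (x : ℝ) (δ ν),
              |(∫ t in Set.Icc (0 : ℝ) 1, deriv (f t) (y : ℝ)) -
                (ν : ℝ)⁻¹ * ∑ i ∈ Finset.range ν, deriv (f (ξ i ω)) (z : ℝ)|)) := by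
  classical
  refine ⟨Stmt0.f, Stmt0.del,
    fun ν => {x ∈ Set.Icc (0 : ℝ) 1 |
        ∀ t ∈ Set.Icc (0 : ℝ) 1, ContDiffOn ℝ 1 (Stmt0.f t) (Metric.closedBall x (Stmt0.del ν))},
    fun t _ => (Stmt0.f_lip t).continuous,
    fun x => (Stmt0.f_t_meas x).comp measurable_subtype_coe,
    fun ν => ⟨Stmt0.del_pos ν, le_trans (Stmt0.del_le ν) (by norm_num)⟩,
    Stmt0.del_anti, Stmt0.del_tendsto, rfl,
    fun t _ => Stmt0.f_lip t,
    fun x => ?_,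
    fun ν => ⟨1, (Stmt0.one_mem_D ν).1, (Stmt0.one_mem_D ν).2⟩, ?_⟩
  · -- integrability
    apply MeasureTheory.Integrable.mono' (MeasureTheory.integrable_const |x|)
    · exact ((Stmt0.f_t_meas x).comp (hmeas 0)).aestronglyMeasurable
    · exact Filter.Eventually.of_forall fun ω => by
        simpa [Real.norm_eq_abs] using Stmt0.f_bdd (ξ 0 ω) x
  · -- the liminf bound
    have hae : ∀ᵐ ω ∂P, ∀ i, ξ i ω ∈ Set.Icc (0:ℝ) 1 := by
      rw [MeasureTheory.ae_all_iff]
      intro i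
      have hm : MeasurableSet ((Set.Icc (0:ℝ) 1)ᶜ) := measurableSet_Icc.compl
      have h0 : P (ξ i ⁻¹' (Set.Icc (0:ℝ) 1)ᶜ) = 0 := by
        rw [← Measure.map_apply (hmeas i) hm, hunif i, Measure.restrict_apply hm]
        simp
      rw [MeasureTheory.ae_iff]
      exact h0
    filter_upwards [hae] with ω hω
    have hhalf : (1:ℝ)/2 ≤ 7/8 := by norm_num
    refine le_trans hhalf (Filter.le_liminf_of_le ?_ ?_)
    · -- coboundedness
      apply Filter.IsBoundedUnder.isCoboundedUnder_ge
      refine Filter.isBoundedUnder_of ⟨2, fun ν => ?_⟩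
      exact Real.iSup_le (fun x => Stmt0.F_le_two ν (fun i => ξ i ω) x) (by norm_num)
    · -- eventual lower bound
      filter_upwards [Filter.eventually_ge_atTop 1] with ν hν
      obtain ⟨c, hc⟩ := Stmt0.A_cover hν (fun i : Fin ν => ξ i ω) (fun i => hω i)
      set n : Stmt0.Idx := ⟨ν, c⟩ with hn
      have hmem : Stmt0.ctr n ∈ {x ∈ Set.Icc (0:ℝ) 1 |
          ∀ t ∈ Set.Icc (0:ℝ) 1, ContDiffOn ℝ 1 (Stmt0.f t)
            (Metric.closedBall x (Stmt0.del ν))} :=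
        ⟨Stmt0.ctr_mem_Icc n, fun t _ => Stmt0.f_contDiffOn t n⟩
      refine le_trans ?_ (le_ciSup ⟨2, ?_⟩ (⟨Stmt0.ctr n, hmem⟩ :
        {x ∈ Set.Icc (0:ℝ) 1 | ∀ t ∈ Set.Icc (0:ℝ) 1, ContDiffOn ℝ 1 (Stmt0.f t)
          (Metric.closedBall x (Stmt0.del ν))}))
      swap
      · rintro v ⟨x, rfl⟩
        exact Stmt0.F_le_two ν (fun i => ξ i ω) _
      haveI : Nonempty ↥(Metric.closedBall (Stmt0.ctr n) (Stmt0.del ν)) :=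
        ⟨⟨Stmt0.ctr n, Metric.mem_closedBall_self (Stmt0.del_pos ν).le⟩⟩
      refine le_ciInf fun y => le_ciInf fun z => ?_
      have hy : (y:ℝ) ∈ Set.Ioo (Stmt0.lo n) (Stmt0.hi n) := Stmt0.ball_sub_Ioo n y.2
      have hz : (z:ℝ) ∈ Set.Ioo (Stmt0.lo n) (Stmt0.hi n) := Stmt0.ball_sub_Ioo n z.2
      rw [Stmt0.exp_integral hy]
      have hsum : ∀ i ∈ Finset.range ν, deriv (Stmt0.f (ξ i ω)) (z:ℝ) = 1 := by
        intro i hi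
        rw [Stmt0.f_deriv _ hz]
        unfold Stmt0.s
        rw [if_pos]
        exact hc ⟨i, Finset.mem_range.mp hi⟩
      rw [Finset.sum_congr rfl hsum, Finset.sum_const, Finset.card_range,
        nsmul_eq_mul, mul_one]
      have hνR : ((ν:ℝ)) ≠ 0 := by
        have : (0:ℝ) < ν := by exact_mod_cast hν
        linarith
      rw [inv_mul_cancel₀ hνR]
      have h8 : (volume (Set.Icc (0:ℝ) 1 ∩ Stmt0.A n.1 n.2)).toReal ≤ 1/8 :=
        Stmt0.exp_le hν
      have h0 : (0:ℝ) ≤ (volume (Set.Icc (0:ℝ) 1 ∩ Stmt0.A n.1 n.2)).toReal :=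
        ENNReal.toReal_nonneg
      rw [abs_sub_comm, abs_of_nonneg (by linarith)]
      linarith
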